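/- arXiv:1709.08651 — 2 statements merged into one kernel-verified Lean document; each statement's English description precedes it below -/
import Mathlib

section
/- For every δ ∈ ℝ there exist a constant C > 0 and an integer N₀ such that for all N ≥ N₀: (i) ‖S₀B(δ)‖_max ≤ C/N²; (ii) ‖B(δ)S₀E‖_max ≤ C/N²; and (iii) ‖P₀⊥E‖_max ≤ C/N. -/
open Filter Matrix

/-- Hankelization (diagonal averaging): the `j`-th value is the average of the
entries `Y i k` with `i + k = j`. -/
noncomputable def hankelize {L K : ℕ} (Y : Matrix (Fin L) (Fin K) ℝ) (j : ℕ) : ℝ :=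
  (∑ i : Fin L, ∑ k : Fin K, if (i : ℕ) + (k : ℕ) = j then Y i k else 0) /
  (∑ i : Fin L, ∑ k : Fin K, if (i : ℕ) + (k : ℕ) = j then (1 : ℝ) else 0)

/-- Squared Euclidean norm of a vector. -/
noncomputable def normSq {M : ℕ} (w : Fin M → ℝ) : ℝ := ∑ i, w i ^ 2

/-- `u` is a unit eigenvector of `A` corresponding to its largest eigenvalue. -/
def IsTopEigenvector {L : ℕ} (A : Matrix (Fin L) (Fin L) ℝ) (u : Fin L → ℝ) : Prop :=
  normSq u = 1 ∧ ∃ μ : ℝ, A.mulVec u = μ • u ∧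
    ∀ (ν : ℝ) (v : Fin L → ℝ), v ≠ 0 → A.mulVec v = ν • v → ν ≤ μ

/-- The discretized exponential signal `x_n = a^{nT/N}`. -/
noncomputable def xdisc (a T : ℝ) (N : ℕ) : ℕ → ℝ := fun n => a ^ ((n : ℝ) * T / (N : ℝ))

/-- The `L × K` Hankel matrix of the discretized signal. -/
noncomputable def Hd (a T : ℝ) (N L K : ℕ) : Matrix (Fin L) (Fin K) ℝ :=
  Matrix.of fun i k => xdisc a T N ((i : ℕ) + (k : ℕ))

/-- The `L × K` Hankel matrix of the harmonic noise `e_n = cos(ξ n + φ)`. -/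
noncomputable def Ed (ξ φ : ℝ) (L K : ℕ) : Matrix (Fin L) (Fin K) ℝ :=
  Matrix.of fun i k => Real.cos (ξ * (((i : ℕ) + (k : ℕ) : ℕ) : ℝ) + φ)

/-- The vector `W_M = (1, a^{T/N}, …, a^{(M-1)T/N})ᵀ`. -/
noncomputable def Wd (a T : ℝ) (N M : ℕ) : Fin M → ℝ := fun i => a ^ (((i : ℕ) : ℝ) * T / (N : ℝ))

/-- `B(δ) = δ(HEᵀ + EHᵀ) + δ²EEᵀ`. -/
noncomputable def Bmat (a T ξ φ δ : ℝ) (N L K : ℕ) : Matrix (Fin L) (Fin L) ℝ :=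
  δ • (Hd a T N L K * (Ed ξ φ L K)ᵀ + Ed ξ φ L K * (Hd a T N L K)ᵀ)
  + δ ^ 2 • (Ed ξ φ L K * (Ed ξ φ L K)ᵀ)

/-- The spectral (ℓ²-operator) norm of a matrix. -/
noncomputable def specNorm {m n : ℕ} (A : Matrix (Fin m) (Fin n) ℝ) : ℝ :=
  ‖(Matrix.toEuclideanLin A).toContinuousLinearMap‖

/-- The max-norm of a matrix: the maximum of the absolute values of its entries. -/
noncomputable def maxNorm {m n : ℕ} (A : Matrix (Fin m) (Fin n) ℝ) : ℝ :=
  ⨆ p : Fin m × Fin n, |A p.1 p.2|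

/-!
The signal Hankel matrix has rank one, `H = W_L W_Kᵀ`, the entries of `W_M` lie in `[1, a^T]`
and `‖W_M‖² ≥ M`, of order `N` for `M = L, K`. The noise only enters through sums
`∑ₗ W_l cos (ξ (l + k) + φ)`, real parts of geometric sums of ratio `a^{T/N} e^{iξ}`; as
`sin ξ ≠ 0` they are bounded by `(a^T + 1) / |sin ξ|` uniformly in `N`. Expanding `W_Lᵀ B(δ)`
with these bounds shows that its entries are `O(N)`. Now `S₀ B(δ) = c W_L (W_Lᵀ B(δ))` and
`B(δ) S₀ E = c (B(δ) W_L) (W_Lᵀ E)` with `c ≍ N⁻³`, and `P₀⊥ E = W_L (W_Lᵀ E) / ‖W_L‖²`.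
-/

open Real Finset

lemma norm_geom_sum_le_div_abs_im {z : ℂ} (hz : z.im ≠ 0) (n : ℕ) :
    ‖∑ k ∈ range n, z ^ k‖ ≤ (‖z‖ ^ n + 1) / |z.im| := by
  have hz1 : z ≠ 1 := fun h => hz (by simp [h])
  have him : |z.im| ≤ ‖z - 1‖ := by simpa using Complex.abs_im_le_norm (z - 1)
  rw [geom_sum_eq hz1, norm_div]
  exact div_le_div₀ (by positivity) ((norm_sub_le _ _).trans (by simp [norm_pow]))
    (abs_pos.2 hz) him

lemma abs_sum_pow_mul_cos_le {r ξ : ℝ} (hr : 0 < r) (hξ : sin ξ ≠ 0) (θ : ℝ) (n : ℕ) :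
    |∑ k ∈ range n, r ^ k * cos (ξ * k + θ)| ≤ (r ^ n + 1) / (r * |sin ξ|) := by
  set z : ℂ := r * Complex.exp (ξ * Complex.I)
  have hzim : z.im = r * sin ξ := by simp [z, Complex.exp_ofReal_mul_I_im]
  have hznorm : ‖z‖ = r := by simp [z, hr.le]
  have hterm (k : ℕ) : r ^ k * cos (ξ * k + θ) = (z ^ k * Complex.exp (θ * Complex.I)).re := by
    rw [mul_pow, mul_assoc, ← Complex.exp_nat_mul, ← Complex.exp_add, ← Complex.ofReal_pow,
      Complex.re_ofReal_mul, show (k : ℂ) * (ξ * Complex.I) + θ * Complex.I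
        = ((ξ * k + θ : ℝ) : ℂ) * Complex.I by push_cast; ring, Complex.exp_ofReal_mul_I_re]
  calc |∑ k ∈ range n, r ^ k * cos (ξ * k + θ)|
      = |((∑ k ∈ range n, z ^ k) * Complex.exp (θ * Complex.I)).re| := by
        simp only [hterm, Finset.sum_mul, Complex.re_sum]
    _ ≤ ‖∑ k ∈ range n, z ^ k‖ := by
        simpa [Complex.norm_exp_ofReal_mul_I] using
          Complex.abs_re_le_norm ((∑ k ∈ range n, z ^ k) * Complex.exp (θ * Complex.I))
    _ ≤ (r ^ n + 1) / (r * |sin ξ|) := by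
        have := norm_geom_sum_le_div_abs_im (z := z) (by simp [hzim, hr.ne', hξ]) n
        rwa [hznorm, hzim, abs_mul, abs_of_pos hr] at this

noncomputable def oscBound (a T ξ : ℝ) : ℝ := (a ^ T + 1) / |sin ξ|

section Signal

variable {a T : ℝ} {N M : ℕ}

lemma Wd_eq_pow (ha : 0 < a) (i : Fin M) : Wd a T N M i = (a ^ (T / N)) ^ (i : ℕ) := by
  rw [Wd, ← rpow_natCast, ← rpow_mul ha.le]
  ring_nf

lemma rpow_mul_div_le_rpow (ha : 1 ≤ a) (hT : 0 ≤ T) {m : ℕ} (hm : m ≤ N) :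
    a ^ (m * T / N) ≤ a ^ T := by
  refine rpow_le_rpow_of_exponent_le ha ?_
  rw [mul_div_right_comm]
  exact mul_le_of_le_one_left hT (div_le_one_of_le₀ (by exact_mod_cast hm) N.cast_nonneg)

lemma one_le_Wd (ha : 1 ≤ a) (hT : 0 ≤ T) (i : Fin M) : 1 ≤ Wd a T N M i :=
  one_le_rpow ha (by positivity)

lemma abs_Wd_le (ha : 1 ≤ a) (hT : 0 ≤ T) (hM : M ≤ N) (i : Fin M) : |Wd a T N M i| ≤ a ^ T := by
  rw [abs_of_pos (zero_lt_one.trans_le (one_le_Wd ha hT i))]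
  exact rpow_mul_div_le_rpow ha hT (i.isLt.le.trans hM)

lemma le_normSq_Wd (ha : 1 ≤ a) (hT : 0 ≤ T) : (M : ℝ) ≤ normSq (Wd a T N M) := by
  calc (M : ℝ) = ∑ _i : Fin M, (1 : ℝ) := by simp
    _ ≤ normSq (Wd a T N M) := sum_le_sum fun i _ => one_le_pow₀ (one_le_Wd ha hT i)

lemma abs_sum_Wd_mul_cos_le {ξ : ℝ} (ha : 1 ≤ a) (hT : 0 ≤ T) (hξ : sin ξ ≠ 0) (hM : M ≤ N)
    (θ : ℝ) : |∑ i : Fin M, Wd a T N M i * cos (ξ * i + θ)| ≤ oscBound a T ξ := by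
  have ha0 : 0 < a := zero_lt_one.trans_le ha
  set r := a ^ (T / N)
  have hr : 1 ≤ r := one_le_rpow ha (by positivity)
  have hrM : r ^ M ≤ a ^ T := by
    rw [← rpow_natCast, ← rpow_mul ha0.le, mul_comm, ← mul_div_assoc]
    exact rpow_mul_div_le_rpow ha hT hM
  calc |∑ i : Fin M, Wd a T N M i * cos (ξ * i + θ)|
      = |∑ k ∈ range M, r ^ k * cos (ξ * k + θ)| := by
        rw [← Fin.sum_univ_eq_sum_range (fun k => r ^ k * cos (ξ * k + θ))]
        simp only [Wd_eq_pow ha0, r]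
    _ ≤ (r ^ M + 1) / (r * |sin ξ|) := abs_sum_pow_mul_cos_le (by positivity) hξ θ M
    _ ≤ oscBound a T ξ :=
        div_le_div₀ (by positivity) (by linarith) (abs_pos.2 hξ)
          (le_mul_of_one_le_left (abs_nonneg _) hr)

lemma Hd_eq_vecMulVec (ha : 0 < a) (L K : ℕ) :
    Hd a T N L K = vecMulVec (Wd a T N L) (Wd a T N K) := by
  ext i k
  rw [Hd, of_apply, vecMulVec_apply, xdisc, Wd, Wd, ← rpow_add ha]
  push_cast
  ring_nf

end Signal

section Noise

variable {ξ φ : ℝ} {L K : ℕ}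

lemma Ed_apply (i : Fin L) (k : Fin K) : Ed ξ φ L K i k = cos (ξ * i + (ξ * k + φ)) := by
  rw [Ed, of_apply]
  push_cast
  ring_nf

lemma abs_Ed_le (i : Fin L) (k : Fin K) : |Ed ξ φ L K i k| ≤ 1 := abs_cos_le_one _

lemma abs_Wd_vecMul_Ed_le {a T : ℝ} {N : ℕ} (ha : 1 ≤ a) (hT : 0 ≤ T) (hξ : sin ξ ≠ 0)
    (hL : L ≤ N) (k : Fin K) : |(Wd a T N L ᵥ* Ed ξ φ L K) k| ≤ oscBound a T ξ := by
  simpa only [vecMul, dotProduct, Ed_apply] using abs_sum_Wd_mul_cos_le ha hT hξ hL (ξ * k + φ)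

lemma abs_Ed_mulVec_Wd_le {a T : ℝ} {N : ℕ} (ha : 1 ≤ a) (hT : 0 ≤ T) (hξ : sin ξ ≠ 0)
    (hK : K ≤ N) (i : Fin L) : |(Ed ξ φ L K *ᵥ Wd a T N K) i| ≤ oscBound a T ξ := by
  simpa only [mulVec, dotProduct, Ed_apply, mul_comm, add_left_comm] using
    abs_sum_Wd_mul_cos_le ha hT hξ hK (ξ * i + φ)

end Noise

section RankOnePerturbation

variable {m n : Type*} [Fintype m] [Fintype n]

lemma abs_dotProduct_le {x y : m → ℝ} {X Y : ℝ} (hx : ∀ i, |x i| ≤ X) (hy : ∀ i, |y i| ≤ Y) :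
    |x ⬝ᵥ y| ≤ Fintype.card m * (X * Y) := by
  calc |x ⬝ᵥ y| ≤ ∑ i, |x i| * |y i| := by
        simpa only [dotProduct, abs_mul] using abs_sum_le_sum_abs (fun i => x i * y i) univ
    _ ≤ ∑ _i : m, X * Y :=
        sum_le_sum fun i _ => mul_le_mul (hx i) (hy i) (abs_nonneg _) ((abs_nonneg _).trans (hx i))
    _ = Fintype.card m * (X * Y) := by simp

lemma vecMul_rankOne_perturbation (W : m → ℝ) (V : n → ℝ) (E : Matrix m n ℝ) (δ : ℝ) :
    W ᵥ* (δ • (vecMulVec W V * Eᵀ + E * (vecMulVec W V)ᵀ) + δ ^ 2 • (E * Eᵀ)) =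
      δ • ((W ⬝ᵥ W) • (E *ᵥ V) + (W ⬝ᵥ E *ᵥ V) • W) + δ ^ 2 • (E *ᵥ (W ᵥ* E)) := by
  simp only [vecMul_add, vecMul_smul, ← vecMul_vecMul, vecMul_vecMulVec, transpose_vecMulVec,
    vecMul_transpose, mulVec_smul, ← dotProduct_mulVec]

lemma abs_vecMul_rankOne_perturbation_le {W : m → ℝ} {V : n → ℝ} {E : Matrix m n ℝ}
    {A D : ℝ} (hW : ∀ i, |W i| ≤ A) (hE : ∀ i k, |E i k| ≤ 1) (hWE : ∀ k, |(W ᵥ* E) k| ≤ D)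
    (hEV : ∀ i, |(E *ᵥ V) i| ≤ D) (δ : ℝ) (j : m) :
    |(W ᵥ* (δ • (vecMulVec W V * Eᵀ + E * (vecMulVec W V)ᵀ) + δ ^ 2 • (E * Eᵀ))) j| ≤
      |δ| * (2 * Fintype.card m * A ^ 2 * D) + δ ^ 2 * (Fintype.card n * D) := by
  have hA : 0 ≤ A := (abs_nonneg _).trans (hW j)
  have hD : 0 ≤ D := (abs_nonneg _).trans (hEV j)
  have hWW : |W ⬝ᵥ W| ≤ Fintype.card m * (A * A) := abs_dotProduct_le hW hW
  have hWEV : |W ⬝ᵥ E *ᵥ V| ≤ Fintype.card m * (A * D) := abs_dotProduct_le hW hEV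
  have hEWE : |(E *ᵥ (W ᵥ* E)) j| ≤ Fintype.card n * (1 * D) := abs_dotProduct_le (hE j) hWE
  rw [vecMul_rankOne_perturbation]
  simp only [Pi.add_apply, Pi.smul_apply, smul_eq_mul]
  calc _ ≤ |δ| * (|W ⬝ᵥ W| * |(E *ᵥ V) j| + |W ⬝ᵥ E *ᵥ V| * |W j|) +
        δ ^ 2 * |(E *ᵥ (W ᵥ* E)) j| := by
        refine (abs_add_le _ _).trans ?_
        rw [abs_mul, abs_mul, abs_pow, sq_abs]
        gcongr
        exact (abs_add_le _ _).trans (by rw [abs_mul, abs_mul])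
    _ ≤ |δ| * (Fintype.card m * (A * A) * D + Fintype.card m * (A * D) * A) +
          δ ^ 2 * (Fintype.card n * (1 * D)) := by
        gcongr
        exacts [hEV j, hW j]
    _ = _ := by ring

end RankOnePerturbation

lemma maxNorm_le {m n : ℕ} {A : Matrix (Fin m) (Fin n) ℝ} {c : ℝ} (h : ∀ i j, |A i j| ≤ c)
    (hc : 0 ≤ c) : maxNorm A ≤ c :=
  Real.iSup_le (fun p => h p.1 p.2) hc

lemma maxNorm_smul_vecMulVec_le {m n : ℕ} {x : Fin m → ℝ} {y : Fin n → ℝ} {X Y : ℝ} (c : ℝ)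
    (hx : ∀ i, |x i| ≤ X) (hy : ∀ j, |y j| ≤ Y) (hX : 0 ≤ X) (hY : 0 ≤ Y) :
    maxNorm (c • vecMulVec x y) ≤ |c| * X * Y := by
  refine maxNorm_le (fun i j => ?_) (by positivity)
  rw [Matrix.smul_apply, vecMulVec_apply, smul_eq_mul, abs_mul, abs_mul, mul_assoc]
  gcongr
  exacts [hx i, hy j]

lemma Bmat_transpose (a T ξ φ δ : ℝ) (N L K : ℕ) :
    (Bmat a T ξ φ δ N L K)ᵀ = Bmat a T ξ φ δ N L K := by
  simp only [Bmat, transpose_add, transpose_smul, transpose_mul, transpose_transpose, add_comm]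

noncomputable def perturbBound (a T ξ δ : ℝ) : ℝ := (2 * |δ| * (a ^ T) ^ 2 + δ ^ 2) * oscBound a T ξ

noncomputable def S₀ (a T : ℝ) (N L K : ℕ) : Matrix (Fin L) (Fin L) ℝ :=
  ((normSq (Wd a T N L)) ^ 2 * normSq (Wd a T N K))⁻¹ • vecMulVec (Wd a T N L) (Wd a T N L)

noncomputable def P₀perp (a T : ℝ) (N L : ℕ) : Matrix (Fin L) (Fin L) ℝ :=
  (normSq (Wd a T N L))⁻¹ • vecMulVec (Wd a T N L) (Wd a T N L)

section Discretization

variable {a T ξ φ δ β : ℝ} {N L K : ℕ}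

lemma oscBound_nonneg (ha : 0 ≤ a) : 0 ≤ oscBound a T ξ := by
  unfold oscBound; positivity

lemma perturbBound_nonneg (ha : 0 ≤ a) : 0 ≤ perturbBound a T ξ δ :=
  mul_nonneg (by positivity) (oscBound_nonneg ha)

lemma abs_Wd_vecMul_Bmat_le (ha : 1 ≤ a) (hT : 0 ≤ T) (hξ : sin ξ ≠ 0) (hL : L ≤ N)
    (hK : K ≤ N) (j : Fin L) :
    |(Wd a T N L ᵥ* Bmat a T ξ φ δ N L K) j| ≤ N * perturbBound a T ξ δ := by
  have hD : 0 ≤ oscBound a T ξ := oscBound_nonneg (zero_le_one.trans ha)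
  rw [Bmat, Hd_eq_vecMulVec (zero_lt_one.trans_le ha)]
  refine (abs_vecMul_rankOne_perturbation_le (abs_Wd_le ha hT hL) abs_Ed_le
    (abs_Wd_vecMul_Ed_le ha hT hξ hL) (abs_Ed_mulVec_Wd_le ha hT hξ hK) δ j).trans ?_
  simp only [Fintype.card_fin]
  have hL' : (L : ℝ) ≤ N := by exact_mod_cast hL
  have hK' : (K : ℝ) ≤ N := by exact_mod_cast hK
  calc _ ≤ |δ| * (2 * N * (a ^ T) ^ 2 * oscBound a T ξ) + δ ^ 2 * (N * oscBound a T ξ) := by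
        gcongr
    _ = _ := by unfold perturbBound; ring

lemma maxNorm_S₀_mul_Bmat_le (ha : 1 ≤ a) (hT : 0 ≤ T) (hξ : sin ξ ≠ 0) (hL : L ≤ N)
    (hK : K ≤ N) :
    maxNorm (S₀ a T N L K * Bmat a T ξ φ δ N L K) ≤
      |((normSq (Wd a T N L)) ^ 2 * normSq (Wd a T N K))⁻¹| * a ^ T *
        (N * perturbBound a T ξ δ) := by
  rw [S₀, smul_mul, vecMulVec_mul]
  exact maxNorm_smul_vecMulVec_le _ (abs_Wd_le ha hT hL) (abs_Wd_vecMul_Bmat_le ha hT hξ hL hK)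
    (by positivity) (mul_nonneg N.cast_nonneg (perturbBound_nonneg (zero_le_one.trans ha)))

lemma maxNorm_Bmat_mul_S₀_mul_Ed_le (ha : 1 ≤ a) (hT : 0 ≤ T) (hξ : sin ξ ≠ 0) (hL : L ≤ N)
    (hK : K ≤ N) :
    maxNorm (Bmat a T ξ φ δ N L K * S₀ a T N L K * Ed ξ φ L K) ≤
      |((normSq (Wd a T N L)) ^ 2 * normSq (Wd a T N K))⁻¹| * (N * perturbBound a T ξ δ) *
        oscBound a T ξ := by
  rw [S₀, Matrix.mul_smul, smul_mul, mul_vecMulVec, vecMulVec_mul, ← vecMul_transpose,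
    Bmat_transpose]
  exact maxNorm_smul_vecMulVec_le _ (abs_Wd_vecMul_Bmat_le ha hT hξ hL hK)
    (abs_Wd_vecMul_Ed_le ha hT hξ hL)
    (mul_nonneg N.cast_nonneg (perturbBound_nonneg (zero_le_one.trans ha)))
    (oscBound_nonneg (zero_le_one.trans ha))

lemma maxNorm_P₀perp_mul_Ed_le (ha : 1 ≤ a) (hT : 0 ≤ T) (hξ : sin ξ ≠ 0) (hL : L ≤ N) :
    maxNorm (P₀perp a T N L * Ed ξ φ L K) ≤
      |(normSq (Wd a T N L))⁻¹| * a ^ T * oscBound a T ξ := by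
  rw [P₀perp, smul_mul, vecMulVec_mul]
  exact maxNorm_smul_vecMulVec_le _ (abs_Wd_le ha hT hL) (abs_Wd_vecMul_Ed_le ha hT hξ hL)
    (by positivity) (oscBound_nonneg (zero_le_one.trans ha))

lemma abs_inv_normSq_Wd_le (ha : 1 ≤ a) (hT : 0 ≤ T) {M : ℕ} (hβN : 0 < β * N)
    (hM : β * N ≤ M) : |(normSq (Wd a T N M))⁻¹| ≤ (β * N)⁻¹ := by
  have h := hM.trans (le_normSq_Wd (N := N) ha hT)
  rw [abs_of_pos (inv_pos.2 (hβN.trans_le h))]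
  exact inv_anti₀ hβN h

lemma abs_inv_normSq_Wd_sq_mul_le (ha : 1 ≤ a) (hT : 0 ≤ T) (hβN : 0 < β * N)
    (hL : β * N ≤ L) (hK : β * N ≤ K) :
    |((normSq (Wd a T N L)) ^ 2 * normSq (Wd a T N K))⁻¹| ≤ ((β * N) ^ 3)⁻¹ := by
  have hW := abs_inv_normSq_Wd_le ha hT hβN hL
  have hV := abs_inv_normSq_Wd_le ha hT hβN hK
  calc _ = |(normSq (Wd a T N L))⁻¹| ^ 2 * |(normSq (Wd a T N K))⁻¹| := by
        rw [mul_inv, abs_mul, ← inv_pow, abs_pow]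
    _ ≤ (β * N)⁻¹ ^ 2 * (β * N)⁻¹ := by gcongr
    _ = ((β * N) ^ 3)⁻¹ := by rw [← pow_succ, inv_pow]

lemma maxNorm_bounds_of_mul_le (ha : 1 ≤ a) (hT : 0 ≤ T) (hξ : sin ξ ≠ 0) (hβ : 0 < β)
    (hN : 0 < N) (hLK : L + K = N + 1) (hL : β * N ≤ L) (hK : β * N ≤ K) :
    maxNorm (S₀ a T N L K * Bmat a T ξ φ δ N L K) ≤
        a ^ T * perturbBound a T ξ δ / β ^ 3 / N ^ 2 ∧
      maxNorm (Bmat a T ξ φ δ N L K * S₀ a T N L K * Ed ξ φ L K) ≤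
        perturbBound a T ξ δ * oscBound a T ξ / β ^ 3 / N ^ 2 ∧
      maxNorm (P₀perp a T N L * Ed ξ φ L K) ≤ a ^ T * oscBound a T ξ / β / N := by
  have hN' : (0 : ℝ) < N := Nat.cast_pos.2 hN
  have hβN : 0 < β * N := mul_pos hβ hN'
  have hL0 : 0 < L := Nat.cast_pos.1 (hβN.trans_le hL)
  have hK0 : 0 < K := Nat.cast_pos.1 (hβN.trans_le hK)
  have hLN : L ≤ N := by omega
  have hKN : K ≤ N := by omega
  have hD : 0 ≤ oscBound a T ξ := oscBound_nonneg (zero_le_one.trans ha)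
  have hC : 0 ≤ perturbBound a T ξ δ := perturbBound_nonneg (zero_le_one.trans ha)
  have hc := abs_inv_normSq_Wd_sq_mul_le ha hT hβN hL hK
  refine ⟨(maxNorm_S₀_mul_Bmat_le ha hT hξ hLN hKN).trans ?_,
    (maxNorm_Bmat_mul_S₀_mul_Ed_le ha hT hξ hLN hKN).trans ?_,
    (maxNorm_P₀perp_mul_Ed_le ha hT hξ hLN).trans ?_⟩
  · calc _ ≤ ((β * N) ^ 3)⁻¹ * a ^ T * (N * perturbBound a T ξ δ) := by gcongr
      _ = _ := by field_simp
  · calc _ ≤ ((β * N) ^ 3)⁻¹ * (N * perturbBound a T ξ δ) * oscBound a T ξ := by gcongr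
      _ = _ := by field_simp
  · calc _ ≤ (β * N)⁻¹ * a ^ T * oscBound a T ξ := by
          gcongr
          exact abs_inv_normSq_Wd_le ha hT hβN hL
      _ = _ := by field_simp

end Discretization

lemma exists_pos_eventually_mul_le {α : ℝ} (hα : α ∈ Set.Ioo (0 : ℝ) 1) {L K : ℕ → ℕ}
    (hLK : ∀ᶠ N in atTop, L N + K N = N + 1)
    (hlim : Tendsto (fun N : ℕ => (L N : ℝ) / N) atTop (nhds α)) :
    ∃ β > (0 : ℝ), ∀ᶠ N : ℕ in atTop, β * N ≤ L N ∧ β * N ≤ K N := by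
  obtain ⟨hα0, hα1⟩ := hα
  refine ⟨min α (1 - α) / 2, by have := lt_min hα0 (sub_pos.2 hα1); positivity, ?_⟩
  filter_upwards [hLK, eventually_gt_atTop 0,
    hlim.eventually (eventually_ge_nhds (half_lt_self hα0)),
    hlim.eventually (eventually_le_nhds (by linarith : α < (1 + α) / 2))] with N hsum hN hlo hhi
  have hN' : (0 : ℝ) < N := Nat.cast_pos.2 hN
  rw [le_div_iff₀ hN'] at hlo
  rw [div_le_iff₀ hN'] at hhi
  have hsum' : (L N : ℝ) + K N = N + 1 := by exact_mod_cast hsum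
  have := min_le_left α (1 - α)
  have := min_le_right α (1 - α)
  constructor <;> nlinarith

theorem stmt_17_general (a T ξ φ α : ℝ) (ha : 1 < a) (hT : 0 < T)
    (hξ : ξ ∈ Set.Ioo 0 Real.pi)
    (hα : α ∈ Set.Ioo (0 : ℝ) 1)
    (L K : ℕ → ℕ)
    (hLK : ∀ N, 3 ≤ N → 1 < L N ∧ 1 < K N ∧ L N + K N = N + 1)
    (hlim : Tendsto (fun N : ℕ => (L N : ℝ) / (N : ℝ)) atTop (nhds α))
    (δ : ℝ) :
    ∃ C > (0 : ℝ), ∃ N₀ : ℕ, ∀ N, N₀ ≤ N →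
      maxNorm
          ((((normSq (Wd a T N (L N))) ^ 2 * normSq (Wd a T N (K N)))⁻¹ •
              Matrix.vecMulVec (Wd a T N (L N)) (Wd a T N (L N))) *
            Bmat a T ξ φ δ N (L N) (K N)) ≤ C / (N : ℝ) ^ 2 ∧
      maxNorm
          (Bmat a T ξ φ δ N (L N) (K N) *
            (((normSq (Wd a T N (L N))) ^ 2 * normSq (Wd a T N (K N)))⁻¹ •
              Matrix.vecMulVec (Wd a T N (L N)) (Wd a T N (L N))) *
            Ed ξ φ (L N) (K N)) ≤ C / (N : ℝ) ^ 2 ∧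
      maxNorm
          (((normSq (Wd a T N (L N)))⁻¹ •
              Matrix.vecMulVec (Wd a T N (L N)) (Wd a T N (L N))) *
            Ed ξ φ (L N) (K N)) ≤ C / (N : ℝ) := by
  obtain ⟨β, hβ, hev⟩ := exists_pos_eventually_mul_le hα
    (eventually_atTop.2 ⟨3, fun N hN => (hLK N hN).2.2⟩) hlim
  have hsin : sin ξ ≠ 0 := (sin_pos_of_pos_of_lt_pi hξ.1 hξ.2).ne'
  have hA : 0 < a ^ T := rpow_pos_of_pos (zero_lt_one.trans ha) T
  have hD : 0 < oscBound a T ξ := div_pos (by positivity) (abs_pos.2 hsin)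
  have hC : 0 ≤ perturbBound a T ξ δ := perturbBound_nonneg (zero_le_one.trans ha.le)
  have hC₁ : 0 ≤ a ^ T * perturbBound a T ξ δ / β ^ 3 := by positivity
  have hC₂ : 0 ≤ perturbBound a T ξ δ * oscBound a T ξ / β ^ 3 := by positivity
  have hC₃ : 0 < a ^ T * oscBound a T ξ / β := by positivity
  refine ⟨a ^ T * perturbBound a T ξ δ / β ^ 3 + perturbBound a T ξ δ * oscBound a T ξ / β ^ 3 +
    a ^ T * oscBound a T ξ / β, by positivity, ?_⟩
  obtain ⟨N₀, hN₀⟩ := eventually_atTop.1 (hev.and (eventually_ge_atTop 3))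
  refine ⟨N₀, fun N hN => ?_⟩
  obtain ⟨⟨hL, hK⟩, hN3⟩ := hN₀ N hN
  obtain ⟨h₁, h₂, h₃⟩ := maxNorm_bounds_of_mul_le (φ := φ) (δ := δ) ha.le hT.le hsin hβ
    (by omega) (hLK N hN3).2.2 hL hK
  refine ⟨h₁.trans ?_, h₂.trans ?_, h₃.trans ?_⟩ <;> gcongr <;> linarith

/-- in the discretization scheme, `‖S₀B(δ)‖_max = O(1/N²)`,
`‖B(δ)S₀E‖_max = O(1/N²)` and `‖P₀⊥E‖_max = O(1/N)`. -/
theorem stmt_17 (a T ξ φ α : ℝ) (ha : 1 < a) (hT : 0 < T)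
    (hξ : ξ ∈ Set.Ioo 0 Real.pi) (hφ : φ ∈ Set.Ico 0 (2 * Real.pi))
    (hα : α ∈ Set.Ioo (0 : ℝ) 1)
    (L K : ℕ → ℕ)
    (hLK : ∀ N, 3 ≤ N → 1 < L N ∧ 1 < K N ∧ L N + K N = N + 1)
    (hlim : Tendsto (fun N : ℕ => (L N : ℝ) / (N : ℝ)) atTop (nhds α))
    (δ : ℝ) :
    ∃ C > (0 : ℝ), ∃ N₀ : ℕ, ∀ N, N₀ ≤ N →
      maxNorm
          ((((normSq (Wd a T N (L N))) ^ 2 * normSq (Wd a T N (K N)))⁻¹ •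
              Matrix.vecMulVec (Wd a T N (L N)) (Wd a T N (L N))) *
            Bmat a T ξ φ δ N (L N) (K N)) ≤ C / (N : ℝ) ^ 2 ∧
      maxNorm
          (Bmat a T ξ φ δ N (L N) (K N) *
            (((normSq (Wd a T N (L N))) ^ 2 * normSq (Wd a T N (K N)))⁻¹ •
              Matrix.vecMulVec (Wd a T N (L N)) (Wd a T N (L N))) *
            Ed ξ φ (L N) (K N)) ≤ C / (N : ℝ) ^ 2 ∧
      maxNorm
          (((normSq (Wd a T N (L N)))⁻¹ •
              Matrix.vecMulVec (Wd a T N (L N)) (Wd a T N (L N))) *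
            Ed ξ φ (L N) (K N)) ≤ C / (N : ℝ) :=
  stmt_17_general a T ξ φ α ha hT hξ hα L K hLK hlim δ
end

section
/- Let a > 1, T > 0 and ξ ∈ (0, π). There exists a constant C > 0, depending only on a, T and ξ, such that for all integers N ≥ 1, all integers M with 1 ≤ M ≤ N + 1, and all ψ ∈ ℝ: |Σ_{j=0}^{M−1} a^{jT/N}·cos(ξ j + ψ)| ≤ C. -/
open Complex Finset

lemma pow_mul_cos_eq_re (b ξ ψ : ℝ) (j : ℕ) :
    b ^ j * Real.cos (ξ * j + ψ) = (exp (ψ * I) * (b * exp (ξ * I)) ^ j).re := by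
  rw [mul_pow, ← exp_nat_mul, mul_left_comm, ← exp_add, ← ofReal_pow,
    show (ψ : ℂ) * I + j * (ξ * I) = ((ξ * j + ψ : ℝ) : ℂ) * I by push_cast; ring,
    re_ofReal_mul, exp_ofReal_mul_I_re]

lemma abs_mul_sin_le_norm_mul_exp_sub_one (b ξ : ℝ) :
    |b * Real.sin ξ| ≤ ‖b * exp (ξ * I) - 1‖ := by
  have him : (b * exp (ξ * I) - 1).im = b * Real.sin ξ := by
    simp [exp_ofReal_mul_I_im]
  exact him ▸ abs_im_le_norm _

/-- Summing the geometric series `∑ (b e^{iξ})^j` and bounding `|b e^{iξ} - 1|` below by its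
imaginary part. -/
lemma abs_sum_pow_mul_cos_le_s18 {b ξ : ℝ} (hb : b ≠ 0) (hξ : Real.sin ξ ≠ 0) (M : ℕ) (ψ : ℝ) :
    |∑ j ∈ range M, b ^ j * Real.cos (ξ * j + ψ)| ≤ (|b| ^ M + 1) / (|b| * |Real.sin ξ|) := by
  set z : ℂ := b * exp (ξ * I)
  have hden : |b| * |Real.sin ξ| ≤ ‖z - 1‖ :=
    abs_mul b _ ▸ abs_mul_sin_le_norm_mul_exp_sub_one b ξ
  have hz : z ≠ 1 := fun h => by
    rw [h, sub_self, norm_zero] at hden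
    exact (by positivity : 0 < |b| * |Real.sin ξ|).not_ge hden
  have hnorm : ‖z‖ = |b| := by simp [z, norm_exp_ofReal_mul_I]
  have hnum : ‖z ^ M - 1‖ ≤ |b| ^ M + 1 := by
    simpa [norm_pow, hnorm] using norm_sub_le (z ^ M) 1
  calc |∑ j ∈ range M, b ^ j * Real.cos (ξ * j + ψ)|
      = |(exp (ψ * I) * ((z ^ M - 1) / (z - 1))).re| := by
        rw [← geom_sum_eq hz, mul_sum, re_sum]
        simp only [pow_mul_cos_eq_re, z]
    _ ≤ ‖z ^ M - 1‖ / ‖z - 1‖ := by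
        simpa [norm_exp_ofReal_mul_I] using abs_re_le_norm (exp (ψ * I) * ((z ^ M - 1) / (z - 1)))
    _ ≤ (|b| ^ M + 1) / (|b| * |Real.sin ξ|) := by gcongr

/-- the sums `Σ_{j=0}^{M-1} a^{jT/N} cos(ξj + ψ)` are bounded
uniformly in `N ≥ 1`, `1 ≤ M ≤ N + 1` and the phase `ψ`. -/
theorem stmt_18 (a T ξ : ℝ) (ha : 1 < a) (hT : 0 < T) (hξ : ξ ∈ Set.Ioo 0 Real.pi) :
    ∃ C > (0 : ℝ), ∀ N : ℕ, 1 ≤ N → ∀ M : ℕ, 1 ≤ M → M ≤ N + 1 → ∀ ψ : ℝ,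
      |∑ j ∈ Finset.range M, a ^ ((j : ℝ) * T / (N : ℝ)) * Real.cos (ξ * (j : ℝ) + ψ)| ≤ C := by
  have hsin : 0 < Real.sin ξ := Real.sin_pos_of_pos_of_lt_pi hξ.1 hξ.2
  refine ⟨(a ^ (2 * T) + 1) / Real.sin ξ, by positivity, fun N hN M _ hMN ψ => ?_⟩
  have hN : (1 : ℝ) ≤ N := by exact_mod_cast hN
  set b := a ^ (T / N)
  have hb : 1 ≤ b := Real.one_le_rpow ha.le (by positivity)
  have hpow (k : ℕ) : a ^ ((k : ℝ) * T / N) = b ^ k := by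
    rw [← Real.rpow_natCast, ← Real.rpow_mul (by linarith)]; ring_nf
  have hbM : b ^ M ≤ a ^ (2 * T) := by
    rw [← hpow, Real.rpow_le_rpow_left_iff ha, div_le_iff₀ (by linarith)]
    have : (M : ℝ) ≤ N + 1 := by exact_mod_cast hMN
    nlinarith
  simp_rw [hpow]
  calc _ ≤ (|b| ^ M + 1) / (|b| * |Real.sin ξ|) :=
        abs_sum_pow_mul_cos_le_s18 (by positivity) hsin.ne' M ψ
    _ ≤ (a ^ (2 * T) + 1) / Real.sin ξ := by
        rw [abs_of_pos (by positivity), abs_of_pos hsin]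
        gcongr
        nlinarith
end
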